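/- arXiv:1008.2156 — 2 statements merged into one kernel-verified Lean document; each statement's English description precedes it below -/
import Mathlib

section
/- Let α₁,…,α₅ be rationals with 0 < αᵢ ≤ 1/2 and ∑ᵢαᵢ = 1. In the k = 3 twisted sector set νᵢ = 3αᵢ/2 mod 1 in [0,1) and ν̃ᵢ = 3(αᵢ−1)/2 mod 1 in (−1,0]. Let A index the fields with αᵢ > 1/3 and m = |A|. Then the ground-state quantum numbers satisfy 2E₃ = m − 1 − 3∑_{A}α_A, q₃ = m − 1 − ∑_{A}α_A, and q̄₃ = −1/2 − ∑_{A}α_A, where E₃ = −5/8 + (1/2)∑ᵢ[νᵢ(1−νᵢ)+ν̃ᵢ(1+ν̃ᵢ)], q₃ = ∑ᵢ[(αᵢ−1)(ν̃ᵢ+1/2) − αᵢ(νᵢ−1/2)], and q̄₃ = ∑ᵢ[αᵢ(ν̃ᵢ+1/2)+(αᵢ−1)(−νᵢ+1/2)]. -/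
/-!
For `0 < α ≤ 1/2` the shift `3α/2` already lies in `[0, 1)`, so `ν = 3α/2`, while `3(α - 1)/2`
lies in `(-1, 0]` exactly when `α > 1/3` and otherwise needs a shift by `1`. Substituting these
closed forms, each field contributes a polynomial in `α` plus a correction only when `α > 1/3`;
summing over the five fields with `∑ α = 1` gives the three formulas.
-/

open Finset

section TwistedModes

variable {K : Type*} [Field K] [LinearOrder K] [IsStrictOrderedRing K]

theorem eq_of_eq_sub_intCast_of_abs_sub_lt_one {x y : K} {n : ℤ} (h : y = x - n)
    (hxy : |x - y| < 1) : y = x := by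
  have hn : |n| < 1 := by
    rw [h, sub_sub_cancel] at hxy
    exact_mod_cast hxy
  rw [h, Int.abs_lt_one_iff.mp hn, Int.cast_zero, sub_zero]

variable {a v vt : K}

theorem twistedMode_eq (hpos : 0 < a) (hle : a ≤ 1 / 2)
    (hv : (∃ n : ℤ, v = 3 * a / 2 - n) ∧ 0 ≤ v ∧ v < 1) : v = 3 * a / 2 := by
  obtain ⟨⟨n, hn⟩, hv0, hv1⟩ := hv
  exact eq_of_eq_sub_intCast_of_abs_sub_lt_one hn (abs_sub_lt_iff.mpr ⟨by linarith, by linarith⟩)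

theorem twistedModeTilde_eq (hpos : 0 < a) (hle : a ≤ 1 / 2)
    (hvt : (∃ n : ℤ, vt = 3 * (a - 1) / 2 - n) ∧ -1 < vt ∧ vt ≤ 0) :
    vt = 3 * (a - 1) / 2 + if 1 / 3 < a then 0 else 1 := by
  obtain ⟨⟨n, hn⟩, hvt1, hvt0⟩ := hvt
  split_ifs with ha
  · rw [add_zero]
    exact eq_of_eq_sub_intCast_of_abs_sub_lt_one hn
      (abs_sub_lt_iff.mpr ⟨by linarith, by linarith⟩)
  · have hn' : vt = (3 * (a - 1) / 2 + 1) - ((n + 1 : ℤ) : K) := by push_cast; linarith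
    exact eq_of_eq_sub_intCast_of_abs_sub_lt_one hn'
      (abs_sub_lt_iff.mpr ⟨by linarith, by linarith⟩)

variable (hv : v = 3 * a / 2) (hvt : vt = 3 * (a - 1) / 2 + if 1 / 3 < a then 0 else 1)
include hv hvt

theorem energy_summand_eq :
    v * (1 - v) + vt * (1 + vt) = (3 / 2 * a - 1 / 4) + if 1 / 3 < a then 1 - 3 * a else 0 := by
  subst hv hvt; split_ifs <;> ring

theorem charge_summand_eq :
    (a - 1) * (vt + 1 / 2) - a * (v - 1 / 2) = -a + if 1 / 3 < a then 1 - a else 0 := by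
  subst hv hvt; split_ifs <;> ring

theorem rCharge_summand_eq :
    a * (vt + 1 / 2) + (a - 1) * (-v + 1 / 2) = (2 * a - 1 / 2) + if 1 / 3 < a then -a else 0 := by
  subst hv hvt; split_ifs <;> ring

end TwistedModes

theorem Finset.sum_add_ite_zero {ι M : Type*} [Fintype ι] [AddCommMonoid M] (p : ι → Prop)
    [DecidablePred p] (f g : ι → M) :
    ∑ i, (f i + if p i then g i else 0) = ∑ i, f i + ∑ i ∈ univ.filter p, g i := by
  rw [sum_add_distrib, sum_filter]

/-- Ground-state quantum numbers in the k = 3 twisted sector of a c = 9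
Landau–Ginzburg orbifold with five fields. -/
theorem k3_vacuum_quantum_numbers (α : Fin 5 → ℚ)
    (hpos : ∀ i, 0 < α i) (hle : ∀ i, α i ≤ 1/2)
    (hsum : ∑ i, α i = 1)
    (ν νt : Fin 5 → ℚ)
    (hν : ∀ i, (∃ n : ℤ, ν i = 3 * α i / 2 - n) ∧ 0 ≤ ν i ∧ ν i < 1)
    (hνt : ∀ i, (∃ n : ℤ, νt i = 3 * (α i - 1) / 2 - n) ∧ -1 < νt i ∧ νt i ≤ 0) :
    let A : Finset (Fin 5) := Finset.univ.filter fun i => 1/3 < α i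
    let m : ℚ := A.card
    let E₃ : ℚ := -5/8 + (1/2) * ∑ i, (ν i * (1 - ν i) + νt i * (1 + νt i))
    let q₃ : ℚ := ∑ i, ((α i - 1) * (νt i + 1/2) - α i * (ν i - 1/2))
    let qb₃ : ℚ := ∑ i, (α i * (νt i + 1/2) + (α i - 1) * (-ν i + 1/2))
    2 * E₃ = m - 1 - 3 * ∑ i ∈ A, α i ∧
    q₃ = m - 1 - ∑ i ∈ A, α i ∧
    qb₃ = -(1/2) - ∑ i ∈ A, α i := by
  intro A m E₃ q₃ qb₃
  have hν' i := twistedMode_eq (hpos i) (hle i) (hν i)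
  have hνt' i := twistedModeTilde_eq (hpos i) (hle i) (hνt i)
  have hE := (sum_congr rfl fun i _ => energy_summand_eq (hν' i) (hνt' i)).trans
    (sum_add_ite_zero _ _ _)
  have hq := (sum_congr rfl fun i _ => charge_summand_eq (hν' i) (hνt' i)).trans
    (sum_add_ite_zero _ _ _)
  have hqb := (sum_congr rfl fun i _ => rCharge_summand_eq (hν' i) (hνt' i)).trans
    (sum_add_ite_zero _ _ _)
  simp only [E₃, q₃, qb₃, m, hE, hq, hqb, sum_sub_distrib, sum_neg_distrib, ← mul_sum, sum_const,
    nsmul_eq_mul, hsum, card_univ, Fintype.card_fin]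
  refine ⟨?_, ?_, ?_⟩ <;> push_cast <;> ring
end

section
/- Let W = x₀⁵ + x₁⁵ + x₂⁵ + x₃⁵ + x₄⁵ ∈ ℂ[x₀,…,x₄]. The space of pairs of 5×5 complex matrices (c, d) satisfying, for each i = 0,…,4, the polynomial identity −4∑ⱼ c^{ij} ∂ⱼW + ∑_{k,j} d^{kj} x_k ∂²W/∂xᵢ∂xⱼ = 0, is exactly 5-dimensional, consisting of the pairs with c and d diagonal and c^{ii} = d^{ii} for all i. -/
open MvPolynomial

/-- The Fermat quintic superpotential. -/
noncomputable def fermatQuintic : MvPolynomial (Fin 5) ℂ := ∑ i, X i ^ 5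

/-!
For `W = ∑ᵢ xᵢⁿ` we have `∂ⱼW = n xⱼⁿ⁻¹` and `∂ᵢ∂ⱼW = n(n-1) δᵢⱼ xᵢⁿ⁻²`, so with the coefficient
`-(n-1)` (which is `-4` for the quintic) the `i`-th equation reads
`n(n-1) (xᵢⁿ⁻² ∑ₖ dₖᵢ xₖ - ∑ⱼ cᵢⱼ xⱼⁿ⁻¹) = 0`. For `n ≥ 3` the monomials `xⱼⁿ⁻¹` (`j ≠ i`),
`xᵢⁿ⁻² xₖ` (`k ≠ i`) and `xᵢⁿ⁻¹` are pairwise distinct, and comparing their coefficients shows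
that row `i` of `c` and column `i` of `d` are the same multiple of the `i`-th unit vector.
-/

theorem Finsupp.single_ne_single_add_single {σ : Type*} {i k : σ} (hk : k ≠ i) {m : ℕ}
    (hm : m ≠ 0) (j : σ) : Finsupp.single j (m + 1) ≠ Finsupp.single i m + Finsupp.single k 1 := by
  intro h
  rcases eq_or_ne j k with rfl | hjk
  · simpa [hk, eq_comm, hm] using DFunLike.congr_fun h i
  · simpa [hjk, hk] using DFunLike.congr_fun h k

namespace Matrix

variable {n α : Type*} [DecidableEq n] [Zero α]

theorem eq_diagonal_iff_row (A : Matrix n n α) (e : n → α) :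
    A = diagonal e ↔ ∀ i, A.row i = Pi.single i (e i) :=
  ⟨by rintro rfl; simp, fun h => ext_row fun i => by simp [h]⟩

theorem eq_diagonal_iff_col (A : Matrix n n α) (e : n → α) :
    A = diagonal e ↔ ∀ i, A.col i = Pi.single i (e i) :=
  ⟨by rintro rfl; simp, fun h => ext_col fun i => by simp [h]⟩

end Matrix

namespace MvPolynomial

variable {σ R : Type*} [CommSemiring R] [Fintype σ]

theorem coeff_single_X_pow_mul_sum_smul_X_of_ne {i j : σ} (hj : j ≠ i) {m : ℕ} (hm : m ≠ 0)
    (b : σ → R) :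
    coeff (Finsupp.single j (m + 1)) (X i ^ m * ∑ l, b l • X l : MvPolynomial σ R) = 0 := by
  rw [X_pow_eq_monomial, coeff_monomial_mul', if_neg]
  simp [Finsupp.single_le_iff, hj.symm, hm]

variable [DecidableEq σ]

theorem coeff_X_pow_mul_sum_smul_X (i k : σ) (m : ℕ) (b : σ → R) :
    coeff (Finsupp.single i m + Finsupp.single k 1)
      (X i ^ m * ∑ l, b l • X l : MvPolynomial σ R) = b k := by
  rw [X_pow_eq_monomial, coeff_monomial_mul, one_mul]
  simp [coeff_sum]

theorem coeff_single_sum_smul_X_pow {n : ℕ} (hn : n ≠ 0) (a : σ → R) (k : σ) :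
    coeff (Finsupp.single k n) (∑ j, a j • X j ^ n) = a k := by
  simp [coeff_sum, coeff_X_pow, Finsupp.single_left_inj hn]

theorem coeff_sum_smul_X_pow_of_ne {n : ℕ} {μ : σ →₀ ℕ} (hμ : ∀ j, Finsupp.single j n ≠ μ)
    (a : σ → R) : coeff μ (∑ j, a j • X j ^ n : MvPolynomial σ R) = 0 := by
  simp [coeff_sum, coeff_X_pow, hμ]

theorem sum_smul_X_pow_eq_X_pow_mul_sum_smul_X_iff {m : ℕ} (hm : m ≠ 0) (i : σ) (a b : σ → R) :
    (∑ j, a j • X j ^ (m + 1) : MvPolynomial σ R) = X i ^ m * ∑ k, b k • X k ↔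
      ∃ e, a = Pi.single i e ∧ b = Pi.single i e := by
  constructor
  · intro h
    have ha : ∀ j ≠ i, a j = 0 := fun j hj => by
      rw [← coeff_single_sum_smul_X_pow m.add_one_ne_zero a j, h,
        coeff_single_X_pow_mul_sum_smul_X_of_ne hj hm]
    have hb : ∀ k ≠ i, b k = 0 := fun k hk => by
      rw [← coeff_X_pow_mul_sum_smul_X i k m b, ← h,
        coeff_sum_smul_X_pow_of_ne (Finsupp.single_ne_single_add_single hk hm)]
    have hab : a i = b i := by
      rw [← coeff_single_sum_smul_X_pow m.add_one_ne_zero a i, h,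
        ← coeff_X_pow_mul_sum_smul_X i i m b, ← Finsupp.single_add]
    refine ⟨a i, ?_, ?_⟩ <;> funext j <;> rcases eq_or_ne j i with rfl | hj
    · simp
    · simp [hj, ha j hj]
    · simp [hab]
    · simp [hj, hb j hj]
  · rintro ⟨e, rfl, rfl⟩
    simp only [Pi.single_apply, ite_smul, zero_smul, Finset.sum_ite_eq', Finset.mem_univ,
      if_true, mul_smul_comm, ← pow_succ]

theorem pderiv_sum_X_pow (n : ℕ) (j : σ) :
    pderiv j (∑ i, X i ^ n : MvPolynomial σ R) = (n : MvPolynomial σ R) * X j ^ (n - 1) := by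
  simp [Pi.single_apply]

theorem pderiv_pderiv_sum_X_pow (n : ℕ) (i j : σ) :
    pderiv i (pderiv j (∑ k, X k ^ n : MvPolynomial σ R)) =
      if i = j then ((n * (n - 1) : ℕ) : MvPolynomial σ R) * X i ^ (n - 2) else 0 := by
  rw [pderiv_sum_X_pow, pderiv_mul, Derivation.map_natCast, pderiv_pow, pderiv_X]
  split_ifs with h
  · subst h; simp [mul_assoc, Nat.sub_sub]
  · simp [h]

end MvPolynomial

section FermatKernel

variable {K σ : Type*} [Field K] [Fintype σ] [DecidableEq σ]

theorem fermat_kernel_row_eq (n : ℕ) (c d : Matrix σ σ K) (i : σ) :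
    (-((n - 1 : ℕ) : K)) • (∑ j, c i j • pderiv j (∑ k, X k ^ n : MvPolynomial σ K)) +
        ∑ k, ∑ j, d k j • (X k * pderiv i (pderiv j (∑ l, X l ^ n : MvPolynomial σ K))) =
      C ((n * (n - 1) : ℕ) : K) *
        (X i ^ (n - 2) * ∑ k, d.col i k • X k - ∑ j, c.row i j • X j ^ (n - 1)) := by
  simp only [pderiv_pderiv_sum_X_pow]
  simp only [pderiv_sum_X_pow, mul_ite, mul_zero, smul_ite, smul_zero,
    Finset.sum_ite_eq, Finset.mem_univ, if_true, Matrix.row_apply, Matrix.col_apply,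
    smul_eq_C_mul]
  have hc : ∑ j, C (c i j) * ((n : MvPolynomial σ K) * X j ^ (n - 1)) =
      (n : MvPolynomial σ K) * ∑ j, C (c i j) * X j ^ (n - 1) := by
    rw [Finset.mul_sum]; exact Finset.sum_congr rfl fun _ _ => by ring
  have hd : ∑ k, C (d k i) * (X k * (((n * (n - 1) : ℕ) : MvPolynomial σ K) * X i ^ (n - 2))) =
      ((n * (n - 1) : ℕ) : MvPolynomial σ K) * X i ^ (n - 2) * ∑ k, C (d k i) * X k := by
    rw [Finset.mul_sum]; exact Finset.sum_congr rfl fun _ _ => by ring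
  rw [hc, hd]
  simp only [Nat.cast_mul, map_neg, map_mul, map_natCast]
  ring

theorem fermat_kernel_iff [CharZero K] {n : ℕ} (hn : 3 ≤ n) (c d : Matrix σ σ K) :
    (∀ i, (-((n - 1 : ℕ) : K)) • (∑ j, c i j • pderiv j (∑ k, X k ^ n : MvPolynomial σ K)) +
        ∑ k, ∑ j, d k j • (X k * pderiv i (pderiv j (∑ l, X l ^ n : MvPolynomial σ K))) = 0) ↔
      ∃ e, c = Matrix.diagonal e ∧ d = Matrix.diagonal e := by
  obtain ⟨m, rfl⟩ : ∃ m, n = m + 2 := ⟨n - 2, by omega⟩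
  have hm : m ≠ 0 := by omega
  have hcoef : (((m + 2) * (m + 2 - 1) : ℕ) : K) ≠ 0 :=
    Nat.cast_ne_zero.mpr (Nat.mul_ne_zero (by omega) (by omega))
  calc _ ↔ ∀ i, ∃ e, c.row i = Pi.single i e ∧ d.col i = Pi.single i e := by
        refine forall_congr' fun i => ?_
        rw [fermat_kernel_row_eq, mul_eq_zero, C_eq_zero, or_iff_right hcoef, sub_eq_zero,
          eq_comm, show m + 2 - 2 = m by omega, show m + 2 - 1 = m + 1 by omega,
          sum_smul_X_pow_eq_X_pow_mul_sum_smul_X_iff hm]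
    _ ↔ ∃ e : σ → K, ∀ i, c.row i = Pi.single i (e i) ∧ d.col i = Pi.single i (e i) :=
        Classical.skolem
    _ ↔ _ := by simp only [Matrix.eq_diagonal_iff_row c, Matrix.eq_diagonal_iff_col d, forall_and]

end FermatKernel

/-- The kernel of Q̄ on the q̄ = −3/2 states of the k = 1 sector of the
Fermat quintic LG orbifold: pairs (c,d) solving the identity are exactly the
pairs of equal diagonal matrices (a 5-dimensional space). -/
theorem fermat_quintic_Qbar_kernel (c d : Matrix (Fin 5) (Fin 5) ℂ) :
    (∀ i : Fin 5,
      (-4 : ℂ) • (∑ j, c i j • pderiv j fermatQuintic) +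
        ∑ k, ∑ j, d k j • (X k * pderiv i (pderiv j fermatQuintic)) = 0)
    ↔ ∃ e : Fin 5 → ℂ, c = Matrix.diagonal e ∧ d = Matrix.diagonal e := by
  rw [show (-4 : ℂ) = -((5 - 1 : ℕ) : ℂ) by norm_num]
  exact fermat_kernel_iff (by norm_num) c d
end
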